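/- arXiv:1908.06210 — 3 statements merged into one kernel-verified Lean document; each statement's English description precedes it below -/
import Mathlib

section
/- Let σ_k > σ_{k+1} ≥ 0 and 0 ≤ η < σ_k - σ_{k+1}, and let H = σ_k⁴ + σ_{k+1}⁴ + η⁴ - 2σ_k²σ_{k+1}² - 2σ_k²η² - 2σ_{k+1}²η². Then s₁ = (σ_k² - σ_{k+1}² + η² - √H) / (2(σ_k² - σ_{k+1}²)) and s₂ = (σ_k² - σ_{k+1}² + η² + √H) / (2(σ_k² - σ_{k+1}²)) both lie in the interval [0, 1]. -/
/-- The candidate values `s₁, s₂` for `cos²(α)` at the stationary points of the rank-one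
attack optimization both lie in `[0, 1]`. -/
theorem s1_s2_mem_Icc (σk σk1 η : ℝ) (hσ : σk > σk1) (hσ1 : σk1 ≥ 0)
    (hη0 : 0 ≤ η) (hη : η < σk - σk1) :
    (σk ^ 2 - σk1 ^ 2 + η ^ 2 -
        Real.sqrt (σk ^ 4 + σk1 ^ 4 + η ^ 4 - 2 * σk ^ 2 * σk1 ^ 2 - 2 * σk ^ 2 * η ^ 2
          - 2 * σk1 ^ 2 * η ^ 2)) / (2 * (σk ^ 2 - σk1 ^ 2)) ∈ Set.Icc (0 : ℝ) 1 ∧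
    (σk ^ 2 - σk1 ^ 2 + η ^ 2 +
        Real.sqrt (σk ^ 4 + σk1 ^ 4 + η ^ 4 - 2 * σk ^ 2 * σk1 ^ 2 - 2 * σk ^ 2 * η ^ 2
          - 2 * σk1 ^ 2 * η ^ 2)) / (2 * (σk ^ 2 - σk1 ^ 2)) ∈ Set.Icc (0 : ℝ) 1 := by
  set H : ℝ := σk ^ 4 + σk1 ^ 4 + η ^ 4 - 2 * σk ^ 2 * σk1 ^ 2 - 2 * σk ^ 2 * η ^ 2
      - 2 * σk1 ^ 2 * η ^ 2 with hHdef
  have hD : 0 < σk ^ 2 - σk1 ^ 2 := by nlinarith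
  have hηD : η ^ 2 < σk ^ 2 - σk1 ^ 2 := by nlinarith
  have hsq : 0 ≤ Real.sqrt H := Real.sqrt_nonneg _
  have hup : Real.sqrt H ≤ σk ^ 2 - σk1 ^ 2 - η ^ 2 := by
    have h1 : H ≤ (σk ^ 2 - σk1 ^ 2 - η ^ 2) ^ 2 := by nlinarith [sq_nonneg (η * σk1)]
    calc Real.sqrt H ≤ Real.sqrt ((σk ^ 2 - σk1 ^ 2 - η ^ 2) ^ 2) := Real.sqrt_le_sqrt h1
      _ = σk ^ 2 - σk1 ^ 2 - η ^ 2 := Real.sqrt_sq (by linarith)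
  have hη2 : 0 ≤ η ^ 2 := sq_nonneg η
  constructor <;> constructor
  · apply div_nonneg _ (by linarith)
    linarith
  · rw [div_le_one (by linarith)]
    linarith
  · apply div_nonneg _ (by linarith)
    linarith
  · rw [div_le_one (by linarith)]
    linarith
end

section
/- Let w ∈ (0, 1/4], e = √((1 + √(1-4w))/(1 - √(1-4w))), and for λ ≥ 0 set p(λ) = (√(λ²+1)+λ)/√((√(λ²+1)+λ)² + 1). Then the inequality p(λ) ≤ √((1+√(1-4w))/2) holds if and only if λ ≤ (e² - 1)/(2e). -/
lemma p_aux_step1 (s u e : ℝ) (hs0 : 0 ≤ s) (hs1 : s < 1) (hu0 : 0 < u)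
    (he : e = Real.sqrt ((1 + s) / (1 - s))) :
    u / Real.sqrt (u ^ 2 + 1) ≤ Real.sqrt ((1 + s) / 2) ↔ u ≤ e := by
  have hediv : 0 ≤ (1 + s) / (1 - s) := div_nonneg (by linarith) (by linarith)
  have hesq : e ^ 2 = (1 + s) / (1 - s) := by rw [he]; exact Real.sq_sqrt hediv
  have hden : (0:ℝ) < Real.sqrt (u ^ 2 + 1) := Real.sqrt_pos.mpr (by positivity)
  have hdsq : Real.sqrt (u ^ 2 + 1) ^ 2 = u ^ 2 + 1 := Real.sq_sqrt (by positivity)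
  have htsq : Real.sqrt ((1 + s) / 2) ^ 2 = (1 + s) / 2 := Real.sq_sqrt (by linarith)
  constructor
  · intro h
    have h2 : (u / Real.sqrt (u ^ 2 + 1)) ^ 2 ≤ Real.sqrt ((1 + s) / 2) ^ 2 :=
      pow_le_pow_left₀ (by positivity) h 2
    rw [div_pow, hdsq, htsq] at h2
    have h3 : u ^ 2 ≤ (1 + s) / (1 - s) := by
      rw [div_le_div_iff₀ (by positivity) (by norm_num)] at h2
      rw [le_div_iff₀ (by linarith)]
      nlinarith
    calc u = Real.sqrt (u ^ 2) := (Real.sqrt_sq hu0.le).symm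
      _ ≤ e := by rw [he]; exact Real.sqrt_le_sqrt h3
  · intro h
    have h3 : u ^ 2 ≤ (1 + s) / (1 - s) := by
      calc u ^ 2 ≤ e ^ 2 := pow_le_pow_left₀ hu0.le h 2
        _ = _ := hesq
    rw [le_div_iff₀ (by linarith)] at h3
    have h2 : u ^ 2 / (u ^ 2 + 1) ≤ (1 + s) / 2 := by
      rw [div_le_div_iff₀ (by positivity) (by norm_num)]
      nlinarith
    calc u / Real.sqrt (u ^ 2 + 1)
        = Real.sqrt (u ^ 2) / Real.sqrt (u ^ 2 + 1) := by rw [Real.sqrt_sq hu0.le]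
      _ = Real.sqrt (u ^ 2 / (u ^ 2 + 1)) := (Real.sqrt_div (sq_nonneg u) (u ^ 2 + 1)).symm
      _ ≤ Real.sqrt ((1 + s) / 2) := Real.sqrt_le_sqrt h2

lemma p_aux_step2 (lam e : ℝ) (hlam : 0 ≤ lam) (he0 : 0 < e) (he1 : 1 ≤ e) :
    Real.sqrt (lam ^ 2 + 1) + lam ≤ e ↔ lam ≤ (e ^ 2 - 1) / (2 * e) := by
  have hsq : Real.sqrt (lam ^ 2 + 1) ^ 2 = lam ^ 2 + 1 := Real.sq_sqrt (by positivity)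
  have hnn : 0 ≤ Real.sqrt (lam ^ 2 + 1) := Real.sqrt_nonneg _
  constructor
  · intro h
    rw [le_div_iff₀ (by positivity)]
    nlinarith
  · intro h
    rw [le_div_iff₀ (by positivity)] at h
    have hel : lam ≤ e := by nlinarith
    have h2 : lam ^ 2 + 1 ≤ (e - lam) ^ 2 := by nlinarith
    have h3 : Real.sqrt (lam ^ 2 + 1) ≤ e - lam := by
      calc Real.sqrt (lam ^ 2 + 1) ≤ Real.sqrt ((e - lam) ^ 2) := Real.sqrt_le_sqrt h2
        _ = e - lam := Real.sqrt_sq (by linarith)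
    linarith

/-- With `w ∈ (0, 1/4]`, `e = √((1+√(1-4w))/(1-√(1-4w)))`, and
`p(λ) = (√(λ²+1)+λ)/√((√(λ²+1)+λ)²+1)` for `λ ≥ 0`, the inequality
`p(λ) ≤ √((1+√(1-4w))/2)` holds if and only if `λ ≤ (e²-1)/(2e)`. -/
theorem p_le_iff_lambda_le (w : ℝ) (hw0 : 0 < w) (hw : w ≤ 1 / 4)
    (lam : ℝ) (hlam : 0 ≤ lam) :
    (Real.sqrt (lam ^ 2 + 1) + lam) /
        Real.sqrt ((Real.sqrt (lam ^ 2 + 1) + lam) ^ 2 + 1) ≤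
      Real.sqrt ((1 + Real.sqrt (1 - 4 * w)) / 2) ↔
    lam ≤ ((Real.sqrt ((1 + Real.sqrt (1 - 4 * w)) / (1 - Real.sqrt (1 - 4 * w)))) ^ 2 - 1) /
      (2 * Real.sqrt ((1 + Real.sqrt (1 - 4 * w)) / (1 - Real.sqrt (1 - 4 * w)))) := by
  have h14 : (0:ℝ) ≤ 1 - 4 * w := by linarith
  set s := Real.sqrt (1 - 4 * w) with hs
  have hs0 : 0 ≤ s := Real.sqrt_nonneg _
  have hssq : s ^ 2 = 1 - 4 * w := Real.sq_sqrt h14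
  have hs1 : s < 1 := by nlinarith
  set u := Real.sqrt (lam ^ 2 + 1) + lam with hu
  have hsq : Real.sqrt (lam ^ 2 + 1) ^ 2 = lam ^ 2 + 1 := Real.sq_sqrt (by positivity)
  have hu1 : 1 ≤ u := by
    have h1 : (1:ℝ) ≤ Real.sqrt (lam ^ 2 + 1) := by
      nlinarith [Real.sqrt_nonneg (lam ^ 2 + 1), hsq]
    simp only [hu]; linarith
  have hu0 : 0 < u := lt_of_lt_of_le one_pos hu1
  set e := Real.sqrt ((1 + s) / (1 - s)) with he
  have hediv : 0 ≤ (1 + s) / (1 - s) := div_nonneg (by linarith) (by linarith)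
  have hesq : e ^ 2 = (1 + s) / (1 - s) := Real.sq_sqrt hediv
  have he0' : 0 ≤ e := Real.sqrt_nonneg _
  have he1 : 1 ≤ e := by
    have h1 : 1 ≤ e ^ 2 := by rw [hesq, le_div_iff₀ (by linarith)]; linarith
    nlinarith
  have he0 : 0 < e := lt_of_lt_of_le one_pos he1
  clear_value s u e
  rw [p_aux_step1 s u e hs0 hs1 hu0 he, hu]
  exact p_aux_step2 lam e hlam he0 he1
end

section
/- Minimize f(v) = ‖v - σ̄‖² over v ∈ R⁴ subject to v₁² + v₃² = v₂² + v₄², where σ̄ = (p₁σ_a, -p₂σ_a, p₂σ_b, p₁σ_b) with p₁² + p₂² = 1 and σ_a, σ_b ≥ 0. The minimum value equals (σ_a² + σ_b²)/2 - √(p₁²σ_a² + p₂²σ_b²)·√(p₂²σ_a² + p₁²σ_b²). -/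
private lemma circ (a1 a2 r : ℝ) (hr : 0 ≤ r) :
    ∃ u1 u2 : ℝ, u1 ^ 2 + u2 ^ 2 = r ^ 2 ∧
      (u1 - a1) ^ 2 + (u2 - a2) ^ 2 = (r - Real.sqrt (a1 ^ 2 + a2 ^ 2)) ^ 2 := by
  set α := Real.sqrt (a1 ^ 2 + a2 ^ 2) with hα
  have hα2 : α ^ 2 = a1 ^ 2 + a2 ^ 2 := Real.sq_sqrt (by positivity)
  by_cases h0 : α = 0
  · have h1 : a1 = 0 ∧ a2 = 0 := by constructor <;> nlinarith [h0 ▸ hα2]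
    exact ⟨r, 0, by ring, by rw [h1.1, h1.2, h0]; ring⟩
  · refine ⟨r * a1 / α, r * a2 / α, ?_, ?_⟩ <;> field_simp <;> nlinarith [hα2]

private lemma cs (u1 u2 a1 a2 r s : ℝ) (hr : 0 ≤ r) (hs : 0 ≤ s)
    (h1 : r ^ 2 = u1 ^ 2 + u2 ^ 2) (h2 : s ^ 2 = a1 ^ 2 + a2 ^ 2) :
    u1 * a1 + u2 * a2 ≤ r * s := by
  have hsq : (u1 * a1 + u2 * a2) ^ 2 ≤ (r * s) ^ 2 := by
    nlinarith [sq_nonneg (u1 * a2 - u2 * a1)]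
  calc u1 * a1 + u2 * a2 ≤ |u1 * a1 + u2 * a2| := le_abs_self _
    _ = Real.sqrt ((u1 * a1 + u2 * a2) ^ 2) := (Real.sqrt_sq_eq_abs _).symm
    _ ≤ Real.sqrt ((r * s) ^ 2) := Real.sqrt_le_sqrt hsq
    _ = r * s := Real.sqrt_sq (mul_nonneg hr hs)

/-- The minimum of `‖v - σ̄‖²` over `v ∈ ℝ⁴` with `v₁² + v₃² = v₂² + v₄²`, where
`σ̄ = (p₁σₐ, -p₂σₐ, p₂σ_b, p₁σ_b)` and `p₁² + p₂² = 1`, equals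
`(σₐ² + σ_b²)/2 - √(p₁²σₐ² + p₂²σ_b²)·√(p₂²σₐ² + p₁²σ_b²)`. -/
theorem min_feasibility_value (p1 p2 σa σb : ℝ) (hp : p1 ^ 2 + p2 ^ 2 = 1)
    (ha : 0 ≤ σa) (hb : 0 ≤ σb) :
    IsLeast
      {x : ℝ | ∃ v : Fin 4 → ℝ,
        (v 0) ^ 2 + (v 2) ^ 2 = (v 1) ^ 2 + (v 3) ^ 2 ∧
        x = (v 0 - p1 * σa) ^ 2 + (v 1 - (-(p2 * σa))) ^ 2 +
            (v 2 - p2 * σb) ^ 2 + (v 3 - p1 * σb) ^ 2}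
      ((σa ^ 2 + σb ^ 2) / 2 -
        Real.sqrt (p1 ^ 2 * σa ^ 2 + p2 ^ 2 * σb ^ 2) *
          Real.sqrt (p2 ^ 2 * σa ^ 2 + p1 ^ 2 * σb ^ 2)) := by
  set α := Real.sqrt (p1 ^ 2 * σa ^ 2 + p2 ^ 2 * σb ^ 2) with hαdef
  set β := Real.sqrt (p2 ^ 2 * σa ^ 2 + p1 ^ 2 * σb ^ 2) with hβdef
  have hα2 : α ^ 2 = p1 ^ 2 * σa ^ 2 + p2 ^ 2 * σb ^ 2 := Real.sq_sqrt (by positivity)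
  have hβ2 : β ^ 2 = p2 ^ 2 * σa ^ 2 + p1 ^ 2 * σb ^ 2 := Real.sq_sqrt (by positivity)
  have hαnn : 0 ≤ α := Real.sqrt_nonneg _
  have hβnn : 0 ≤ β := Real.sqrt_nonneg _
  constructor
  · -- membership
    set r := (α + β) / 2 with hrdef
    have hr : 0 ≤ r := by positivity
    obtain ⟨u1, u2, hu, hu'⟩ := circ (p1 * σa) (p2 * σb) r hr
    obtain ⟨w1, w2, hw, hw'⟩ := circ (-(p2 * σa)) (p1 * σb) r hr
    have e1 : Real.sqrt ((p1 * σa) ^ 2 + (p2 * σb) ^ 2) = α := by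
      rw [hαdef]; ring_nf
    have e2 : Real.sqrt ((-(p2 * σa)) ^ 2 + (p1 * σb) ^ 2) = β := by
      rw [hβdef]; ring_nf
    rw [e1, hrdef] at hu'
    rw [e2, hrdef] at hw'
    refine Set.mem_setOf.mpr ⟨![u1, w1, u2, w2], ?_, ?_⟩
    · show u1 ^ 2 + u2 ^ 2 = w1 ^ 2 + w2 ^ 2
      exact hu.trans hw.symm
    · show (σa ^ 2 + σb ^ 2) / 2 - α * β =
        (u1 - p1 * σa) ^ 2 + (w1 - (-(p2 * σa))) ^ 2 +
          (u2 - p2 * σb) ^ 2 + (w2 - p1 * σb) ^ 2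
      linear_combination -hu' - hw' - hα2/2 - hβ2/2 - (σa^2+σb^2)/2 * hp
  · -- lower bound
    rintro x ⟨v, hc, rfl⟩
    set r := Real.sqrt ((v 0) ^ 2 + (v 2) ^ 2) with hrdef
    have hrnn : 0 ≤ r := Real.sqrt_nonneg _
    have hr2 : r ^ 2 = (v 0) ^ 2 + (v 2) ^ 2 := Real.sq_sqrt (by positivity)
    have hr2' : r ^ 2 = (v 1) ^ 2 + (v 3) ^ 2 := hr2.trans hc
    have cs1 : v 0 * (p1 * σa) + v 2 * (p2 * σb) ≤ r * α := cs _ _ _ _ _ _ hrnn hαnn hr2 (hα2.trans (by ring))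
    have cs2 : v 1 * (-(p2 * σa)) + v 3 * (p1 * σb) ≤ r * β := cs _ _ _ _ _ _ hrnn hβnn hr2' (hβ2.trans (by ring))
    nlinarith [sq_nonneg (2 * r - α - β), hr2, hr2', hα2, hβ2, hp, cs1, cs2]
end
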